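/- Let τ ∈ ℂ with Im τ > 0, and let s, t : ℂ → ℂ be entire functions such that s(z + 1) = s(z), t(z + 1) = t(z), t(z + τ) = t(z), and s(z + τ) = s(z) + t(z) for all z. Then t = 0 and s is constant. -/
import Mathlib

open Function Set Bornology

/-- An entire doubly periodic function (periods 1 and τ with Im τ > 0) is constant. -/
theorem elliptic_is_const (τ : ℂ) (hτ : 0 < τ.im) (f : ℂ → ℂ)
    (hf : Differentiable ℂ f) (h1 : Periodic f 1) (h2 : Periodic f τ) :
    ∀ z w, f z = f w := by
  apply hf.apply_eq_apply_of_bounded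
  have hτ0 : τ.im ≠ 0 := ne_of_gt hτ
  set K : Set ℂ := (fun p : ℝ × ℝ => (p.1 : ℂ) + p.2 * τ) '' (Icc (0:ℝ) 1 ×ˢ Icc (0:ℝ) 1)
  have hK : IsCompact K := by
    apply (isCompact_Icc.prod isCompact_Icc).image
    fun_prop
  have hsub : range f ⊆ f '' K := by
    rintro _ ⟨z, rfl⟩
    set y : ℝ := z.im / τ.im with hy
    set x : ℝ := z.re - y * τ.re with hx
    refine ⟨((Int.fract x : ℝ) : ℂ) + ((Int.fract y : ℝ) : ℂ) * τ, ⟨(Int.fract x, Int.fract y), ?_, rfl⟩, ?_⟩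
    · exact ⟨⟨Int.fract_nonneg x, (Int.fract_lt_one x).le⟩,
        ⟨Int.fract_nonneg y, (Int.fract_lt_one y).le⟩⟩
    · have hz : z = ((((Int.fract x : ℝ) : ℂ) + ((Int.fract y : ℝ) : ℂ) * τ) + (⌊y⌋ : ℤ) * τ) + (⌊x⌋ : ℤ) * 1 := by
        have hzx : z = (x : ℂ) + (y : ℂ) * τ := by
          apply Complex.ext <;> simp [hx, hy]; field_simp
        rw [hzx]
        have hfx : (x : ℂ) = ((Int.fract x : ℝ) : ℂ) + (⌊x⌋ : ℤ) := by
          exact_mod_cast (Int.fract_add_floor x).symm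
        have hfy : (y : ℂ) = ((Int.fract y : ℝ) : ℂ) + (⌊y⌋ : ℤ) := by
          exact_mod_cast (Int.fract_add_floor y).symm
        rw [hfx, hfy]; ring
      rw [hz, (h1.int_mul ⌊x⌋) _, (h2.int_mul ⌊y⌋) _]
  exact (hK.image hf.continuous).isBounded.subset hsub

/-- if `s, t` are entire, `s` and `t` have period `1`, `t` also has
period `τ` (with `Im τ > 0`), and `s(z+τ) = s(z) + t(z)` for all `z`, then `t = 0`
and `s` is constant.  (Key step in showing Atiyah's bundle `Fₙ` over the elliptic
curve `ℂ/⟨1,τ⟩` has a one-dimensional space of sections.) -/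
theorem quasi_periodic_forces_constant
    (τ : ℂ) (hτ : 0 < τ.im) (s t : ℂ → ℂ)
    (hs : Differentiable ℂ s) (ht : Differentiable ℂ t)
    (hs1 : ∀ z, s (z + 1) = s z)
    (ht1 : ∀ z, t (z + 1) = t z)
    (htτ : ∀ z, t (z + τ) = t z)
    (hsτ : ∀ z, s (z + τ) = s z + t z) :
    (∀ z, t z = 0) ∧ ∃ c : ℂ, ∀ z, s z = c := by
  -- t is doubly periodic, hence constant
  have htconst : ∀ z w, t z = t w := elliptic_is_const τ hτ t ht ht1 htτ
  -- the derivative of s is entire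
  have hsA : AnalyticOnNhd ℂ s Set.univ := fun w _ => hs.analyticAt w
  have hsd : Differentiable ℂ (deriv s) := fun z => (hsA.deriv z trivial).differentiableAt
  -- deriv s has period 1
  have hd1 : Periodic (deriv s) 1 := by
    intro z
    have : (fun x => s (x + 1)) = s := funext hs1
    calc deriv s (z + 1) = deriv (fun x => s (x + 1)) z := (deriv_comp_add_const s 1 z).symm
      _ = deriv s z := by rw [this]
  -- deriv s has period τ
  have hdτ : Periodic (deriv s) τ := by
    intro z
    have heq : (fun x => s (x + τ)) = fun x => s x + t 0 := by
      funext x; rw [hsτ x, htconst x 0]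
    calc deriv s (z + τ) = deriv (fun x => s (x + τ)) z := (deriv_comp_add_const s τ z).symm
      _ = deriv s z := by rw [heq]; simp
  -- hence deriv s is constant
  have hdconst : ∀ z w, deriv s z = deriv s w := elliptic_is_const τ hτ (deriv s) hsd hd1 hdτ
  set a := deriv s 0 with ha
  -- s z - a * z has zero derivative, hence is constant
  have hF : ∀ z w, s z - a * z = s w - a * w := by
    apply is_const_of_deriv_eq_zero (𝕜 := ℂ) (f := fun z => s z - a * z)
    · exact hs.sub (differentiable_id.const_mul a)
    · intro z
      have h1 : HasDerivAt (fun z => s z - a * z) (deriv s z - a * 1) z :=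
        (hs z).hasDerivAt.sub ((hasDerivAt_id z).const_mul a)
      rw [h1.deriv, hdconst z 0, ← ha]; ring
  -- period 1 of s forces a = 0
  have ha0 : a = 0 := by
    have h := hF 1 0
    have h10 : s 1 = s 0 := by simpa using hs1 0
    rw [h10] at h
    linear_combination -h
  have hsconst : ∀ z w, s z = s w := by
    intro z w
    have := hF z w
    rw [ha0] at this; simpa using this
  -- finally t = 0
  have ht0 : t 0 = 0 := by
    have h := hsτ 0
    rw [zero_add, hsconst τ 0] at h
    linear_combination -h
  refine ⟨fun z => by rw [htconst z 0, ht0], ⟨s 0, fun z => hsconst z 0⟩⟩
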